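/- arXiv:2201.07946 — 3 statements merged into one kernel-verified Lean document; each statement's English description precedes it below -/
import Mathlib

section
/- In a static validator set of size n partitioned into n/m disjoint groups each of size m, where m divides n and m < n - f_L, if in each 'world i' group P_i is honest and all other groups are adversarial, and the worlds are indistinguishable to a late-coming client, then any forensic protocol that always outputs at least one validator as adversarial must, in some world i*, output an honest validator (one from P_{i*}) with probability at least m/n. -/
open Finset

/-! Every output of the procedure names some validator, and every validator lies in some group,
so the events "the output meets `P i`" cover the sample space. By the union bound their
probabilities sum to at least `1`, hence one of the `k` of them has probability at least
`1 / k = m / n`. -/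

theorem Finset.sum_le_sum_sum_filter_of_forall_exists {ι Ω M : Type*}
    [AddCommMonoid M] [PartialOrder M] [IsOrderedAddMonoid M]
    {s : Finset Ω} {t : Finset ι} {p : Ω → M} {A : ι → Ω → Prop} [∀ i, DecidablePred (A i)]
    (hp : ∀ ω ∈ s, 0 ≤ p ω) (hcover : ∀ ω ∈ s, ∃ i ∈ t, A i ω) :
    ∑ ω ∈ s, p ω ≤ ∑ i ∈ t, ∑ ω ∈ s with A i ω, p ω := by
  simp_rw [sum_filter]
  rw [sum_comm]
  refine sum_le_sum fun ω hω => ?_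
  obtain ⟨i, hi, hAi⟩ := hcover ω hω
  calc p ω = if A i ω then p ω else 0 := (if_pos hAi).symm
    _ ≤ ∑ j ∈ t, if A j ω then p ω else 0 :=
      single_le_sum (f := fun j => if A j ω then p ω else 0)
        (fun j _ => by split_ifs <;> simp [hp ω hω]) hi

theorem Finset.exists_inv_card_le_of_one_le_sum {ι : Type*} {t : Finset ι} (ht : t.Nonempty)
    {q : ι → ℝ} (hq : 1 ≤ ∑ i ∈ t, q i) : ∃ i ∈ t, (#t : ℝ)⁻¹ ≤ q i := by
  refine exists_le_of_sum_le ht ?_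
  rwa [sum_const, nsmul_eq_mul, mul_inv_cancel₀ (by exact_mod_cast ht.card_pos.ne')]

theorem forensic_blames_honest_with_prob_general
    (n m k : ℕ) (hm : 0 < m) (hk : 0 < k) (hn : n = k * m)
    (P : Fin k → Finset (Fin n))
    (hcover : ∀ v : Fin n, ∃ i, v ∈ P i)
    (Ω : Type) [Fintype Ω]
    (p : Ω → ℝ) (hp : ∀ ω, 0 ≤ p ω) (hsum : ∑ ω, p ω = 1)
    (F : Ω → Finset (Fin n)) (hne : ∀ ω, (F ω).Nonempty) :
    ∃ i : Fin k,
      (m : ℝ) / (n : ℝ) ≤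
        ∑ ω ∈ Finset.univ.filter (fun ω => (F ω ∩ P i).Nonempty), p ω := by
  have hblame : ∀ ω ∈ (univ : Finset Ω), ∃ i ∈ (univ : Finset (Fin k)), (F ω ∩ P i).Nonempty := by
    intro ω _
    obtain ⟨v, hv⟩ := hne ω
    obtain ⟨i, hi⟩ := hcover v
    exact ⟨i, mem_univ i, v, mem_inter.mpr ⟨hv, hi⟩⟩
  have hunion := sum_le_sum_sum_filter_of_forall_exists (fun ω _ => hp ω) hblame
  rw [hsum] at hunion
  obtain ⟨i, -, hi⟩ := exists_inv_card_le_of_one_le_sum (univ_nonempty_iff.mpr ⟨⟨0, hk⟩⟩) hunion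
  refine ⟨i, le_of_eq_of_le ?_ hi⟩
  rw [card_univ, Fintype.card_fin, hn, Nat.cast_mul, div_mul_cancel_right₀ (by positivity)]

/-- a static validator set of size `n` is partitioned into
`k = n/m` disjoint groups `P i`, each of size `m`.  A (possibly randomized)
forensic procedure is modeled by a finite sample space `Ω` with probability
mass `p` and an output map `F : Ω → Finset (Fin n)` which always outputs a
nonempty set of accused validators; the output distribution is identical
across the `k` indistinguishable worlds (in world `i` the honest validators
are exactly `P i`).  Then in some world `i*` the forensic output blames an
honest validator (one from `P i*`) with probability at least `m / n`. -/
theorem forensic_blames_honest_with_prob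
    (n m k : ℕ) (hm : 0 < m) (hk : 0 < k) (hn : n = k * m)
    (P : Fin k → Finset (Fin n))
    (hdisj : ∀ i j, i ≠ j → Disjoint (P i) (P j))
    (hcard : ∀ i, (P i).card = m)
    (hcover : ∀ v : Fin n, ∃ i, v ∈ P i)
    (Ω : Type) [Fintype Ω]
    (p : Ω → ℝ) (hp : ∀ ω, 0 ≤ p ω) (hsum : ∑ ω, p ω = 1)
    (F : Ω → Finset (Fin n)) (hne : ∀ ω, (F ω).Nonempty) :
    ∃ i : Fin k,
      (m : ℝ) / (n : ℝ) ≤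
        ∑ ω ∈ Finset.univ.filter (fun ω => (F ω ∩ P i).Nonempty), p ω :=
  forensic_blames_honest_with_prob_general n m k hm hk hn P hcover Ω p hp hsum F hne
end

section
/- Let the honest views of the Babylon chain at any time be lists that pairwise satisfy: the k-deep prefix of one is a prefix of the other. Then the function t ↦ (shortest honest view at time t, truncated to k-deep prefix) is monotone under the prefix order: for t ≤ t', the k-deep prefix of the shortest honest chain at time t is a prefix of the k-deep prefix of the shortest honest chain at time t'. -/
/-- The `k`-deep prefix of a list: drop the last `min k |l|` elements. -/
def deepPrefix {α : Type*} (k : ℕ) (l : List α) : List α := l.take (l.length - k)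

/-- honest views of the Babylon chain grow monotonically in
time and pairwise satisfy the `k`-deep prefix-consistency property at all
pairs of times.  Then the shortest honest view, truncated to its `k`-deep
prefix, is monotone under the prefix order: for `t ≤ t'`, the `k`-deep prefix
of the shortest honest chain at time `t` is a prefix of the `k`-deep prefix of
the shortest honest chain at time `t'`. -/
theorem shortest_view_deep_prefix_monotone
    {Node B : Type*} (view : Node → ℕ → List B) (k : ℕ)
    (hmono : ∀ nd t t', t ≤ t' → view nd t <+: view nd t')
    (hconsist : ∀ nd t nd' t',
      deepPrefix k (view nd t) <+: view nd' t' ∨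
      deepPrefix k (view nd' t') <+: view nd t) :
    ∀ t t' : ℕ, t ≤ t' →
      ∀ nd nd' : Node,
        (∀ m, (view nd t).length ≤ (view m t).length) →
        (∀ m, (view nd' t').length ≤ (view m t').length) →
        deepPrefix k (view nd t) <+: deepPrefix k (view nd' t') := by
  intro t t' htt nd nd' hshort hshort'
  -- length of shortest at t ≤ length of nd' t'
  have hlen : (view nd t).length ≤ (view nd' t').length :=
    le_trans (hshort nd') ((hmono nd' t t' htt).length_le)
  rcases hconsist nd t nd' t' with h | h
  · -- deepPrefix k (view nd t) <+: view nd' t', with small enough length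
    simp only [deepPrefix]
    rw [List.prefix_take_iff]
    refine ⟨h, ?_⟩
    simp only [List.length_take]
    omega
  · -- deepPrefix k (view nd' t') <+: view nd t : compare two prefixes of view nd t
    have h1 : deepPrefix k (view nd t) <+: view nd t := List.take_prefix _ _
    apply List.prefix_of_prefix_length_le h1 h
    simp only [deepPrefix, List.length_take]
    omega
end

section
/- In the inactivity-leak setting: if a protocol slashes exactly the validators that did not vote on a chain, and the adversary (controlling set A) builds a private chain on which only A votes while honest set H builds the public chain on which only H votes, then on each chain the slashed set equals the complement of that chain's voter set, and a late-coming observer presented with both chains sees two chains in which the slashed sets are A^c and H^c = A respectively; in particular, if |A| = |H|, the two chains are symmetric and no function of the pair of chains (invariant under swapping) can output a nonempty set of validators guaranteed to be adversarial. -/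
open Finset

variable {V : Type*} [DecidableEq V] [Fintype V]

/-- A chain is modeled by its voter set `S`; the protocol slashes exactly the
validators that did not vote on the chain. -/
def slashedSet (S : Finset V) : Finset V := Sᶜ

/-- inactivity-leak attack: the validator set is
partitioned into the adversarial set `A` and the honest set `H` with
`|A| = |H|`.  The adversary builds a private chain with voter set `A`, the
honest validators build the public chain with voter set `H`; on each chain the
slashed set is the complement of its voter set.  A forensic function `F` maps
the (unordered, hence symmetric) pair of observed voter sets to a set of
accused validators and must be sound — accuse only actual adversaries — in
every world consistent with the observation.  Since the worlds with adversary
`A` and adversary `H` yield the same observation, `F` must output the empty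
set. -/
theorem inactivity_leak_not_accountable
    (A H : Finset V) (hdisj : Disjoint A H) (hunion : A ∪ H = Finset.univ)
    (hcardeq : A.card = H.card)
    (F : Finset V → Finset V → Finset V)
    (hsym : F A H = F H A)
    (hsoundA : F A H ⊆ A)
    (hsoundH : F H A ⊆ H) :
    slashedSet A = Aᶜ ∧ slashedSet H = Hᶜ ∧ F A H = ∅ := by
  refine ⟨rfl, rfl, ?_⟩
  have h : F A H ⊆ A ∩ H := subset_inter hsoundA (hsym ▸ hsoundH)
  rw [Finset.disjoint_iff_inter_eq_empty.mp hdisj] at h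
  exact subset_empty.mp h
end
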